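/- arXiv:2503.21407 — 4 statements merged into one kernel-verified Lean document; each statement's English description precedes it below -/
import Mathlib

section
/- Let ε ∈ (0,1), N ≥ 1, and let M be the N×N circulant matrix with entries M_{i,j} = (ε^{d} + ε^{N-d})/(1-ε) where d = (j - i) mod N. Then the eigenvalues of M are λ_k = ((1-ε^N)/(1-ε)) · (1-ε²)/(1 - 2ε·cos(2πk/N) + ε²) for k = 0,…,N-1. -/
/-!
A matrix whose entries depend only on `j - i` is diagonalised by the additive characters of
`ZMod N`: the character `j ↦ z ^ j` with `z = exp (-2πik/N)` is an eigenvector with eigenvalue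
`∑ d, m_d z ^ d`. Writing `ε ^ (N - d) z ^ d = ε ^ N (z / ε) ^ d`, this sum splits into two
geometric series, which add up to `(1 - ε ^ N)` times the Poisson kernel
`(1 - ε ^ 2) / ((1 - ε z) (1 - ε z⁻¹))`, and `z + z⁻¹ = 2 cos (2πk/N)`.
-/

open Complex Finset Matrix

theorem Matrix.mulVec_addChar_of_apply_eq_sub {G R : Type*} [AddCommGroup G] [Fintype G]
    [CommRing R] (f : G → R) {M : Matrix G G R}
    (hM : ∀ i j, M i j = f (j - i)) (ψ : AddChar G R) :
    M *ᵥ ⇑ψ = (∑ d, f d * ψ d) • ⇑ψ := by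
  funext i
  simp only [mulVec, dotProduct, hM, Pi.smul_apply, smul_eq_mul, sum_mul]
  refine Fintype.sum_equiv (Equiv.subRight i) _ _ fun j => ?_
  rw [Equiv.subRight_apply, mul_assoc, ← AddChar.map_add_eq_mul, sub_add_cancel]

theorem ZMod.sum_comp_val {M : Type*} [AddCommMonoid M] (N : ℕ) [NeZero N] (g : ℕ → M) :
    ∑ d : ZMod N, g d.val = ∑ m ∈ range N, g m := by
  obtain ⟨n, rfl⟩ : ∃ n, N = n + 1 := Nat.exists_eq_succ_of_ne_zero (NeZero.ne N)
  exact Fin.sum_univ_eq_sum_range g (n + 1)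

section Field

variable {K : Type*} [Field K]

theorem sum_range_pow_add_pow_sub_mul_pow {N : ℕ} {e z : K} (he : e ≠ 0) (hz : z ^ N = 1)
    (hez : e * z ≠ 1) (hze : z ≠ e) :
    ∑ m ∈ range N, (e ^ m + e ^ (N - m)) * z ^ m =
      (1 - e ^ N) * (1 / (1 - e * z) + e / (z - e)) := by
  have hterm : ∀ m ∈ range N,
      (e ^ m + e ^ (N - m)) * z ^ m = (e * z) ^ m + e ^ N * (z / e) ^ m := by
    intro m hm
    rw [pow_sub₀ _ he (mem_range.1 hm).le, mul_pow, div_pow]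
    field_simp
  have hze' : z / e ≠ 1 := fun h => hze ((div_eq_one_iff_eq he).1 h)
  have h1 : 1 - e * z ≠ 0 := sub_ne_zero.2 (Ne.symm hez)
  have h2 : z - e ≠ 0 := sub_ne_zero.2 hze
  rw [sum_congr rfl hterm, sum_add_distrib, ← mul_sum, geom_sum_eq hez, geom_sum_eq hze', mul_pow,
    div_pow, hz]
  field_simp
  ring

theorem one_div_one_sub_mul_add_div_sub {e z c : K} (hz : z ^ 2 + 1 = 2 * c * z)
    (hez : e * z ≠ 1) (hze : z ≠ e) :
    1 / (1 - e * z) + e / (z - e) = (1 - e ^ 2) / (1 - 2 * e * c + e ^ 2) := by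
  have h1 : 1 - e * z ≠ 0 := sub_ne_zero.2 (Ne.symm hez)
  have h2 : z - e ≠ 0 := sub_ne_zero.2 hze
  have hfactor : (1 - e * z) * (z - e) = z * (1 - 2 * e * c + e ^ 2) := by
    linear_combination (-e) * hz
  have hD : 1 - 2 * e * c + e ^ 2 ≠ 0 := by
    intro h
    rw [h, mul_zero] at hfactor
    exact mul_ne_zero h1 h2 hfactor
  rw [div_add_div _ _ h1 h2, div_eq_div_iff (mul_ne_zero h1 h2) hD, hfactor]
  ring

end Field

theorem Complex.exp_mul_I_sq_add_one (θ : ℂ) :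
    exp (θ * I) ^ 2 + 1 = 2 * cos θ * exp (θ * I) := by
  rw [two_cos, add_mul, ← exp_add, ← exp_add, sq, ← exp_add, neg_mul, neg_add_cancel, exp_zero]

theorem sum_range_mul_exp_mul_I_pow {N : ℕ} {ε : ℝ} (hε0 : ε ≠ 0) (hε : |ε| < 1) {θ : ℝ}
    (hN : exp (θ * I) ^ N = 1) :
    ∑ m ∈ range N, (((ε ^ m + ε ^ (N - m)) / (1 - ε) : ℝ) : ℂ) * exp (θ * I) ^ m =
      (((1 - ε ^ N) / (1 - ε) * ((1 - ε ^ 2) / (1 - 2 * ε * Real.cos θ + ε ^ 2)) : ℝ) : ℂ) := by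
  set z := exp (θ * I)
  have hz : ‖z‖ = 1 := norm_exp_ofReal_mul_I θ
  have hε' : ‖(ε : ℂ)‖ < 1 := by rwa [norm_real, Real.norm_eq_abs]
  have hez : (ε : ℂ) * z ≠ 1 :=
    ne_of_apply_ne norm (by rw [norm_mul, hz, mul_one, norm_one]; exact hε'.ne)
  have hze : z ≠ ε := ne_of_apply_ne norm (by rw [hz]; exact hε'.ne')
  push_cast
  simp only [div_mul_eq_mul_div, ← sum_div]
  rw [sum_range_pow_add_pow_sub_mul_pow (ofReal_ne_zero.2 hε0) hN hez hze,
    one_div_one_sub_mul_add_div_sub (exp_mul_I_sq_add_one θ) hez hze]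

open Complex in
theorem circulant_eigenvalues_general (N : ℕ) [NeZero N] (ε : ℝ) (hε : 0 < ε) (hε1 : ε < 1)
    (M : Matrix (ZMod N) (ZMod N) ℝ)
    (hM : ∀ i j : ZMod N, M i j = (ε ^ (j - i).val + ε ^ (N - (j - i).val)) / (1 - ε)) :
    ∀ k : ZMod N,
      (M.map (Complex.ofReal)).mulVec
          (fun j : ZMod N => Complex.exp (-2 * Real.pi * Complex.I / N) ^ (j.val * k.val))
        = (((1 - ε ^ N) / (1 - ε) *
              ((1 - ε ^ 2) / (1 - 2 * ε * Real.cos (2 * Real.pi * k.val / N) + ε ^ 2)) : ℝ) : ℂ) •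
            (fun j : ZMod N => Complex.exp (-2 * Real.pi * Complex.I / N) ^ (j.val * k.val)) := by
  intro k
  set θ : ℝ := 2 * Real.pi * k.val / N
  have hω : exp (-2 * Real.pi * I / N) ^ k.val = exp ((-θ : ℝ) * I) := by
    rw [← exp_nat_mul]
    push_cast [θ]
    ring_nf
  have hzN : exp ((-θ : ℝ) * I) ^ N = 1 := by
    rw [← hω, pow_right_comm, neg_mul, neg_mul, neg_div, exp_neg, inv_pow,
      (isPrimitiveRoot_exp N (NeZero.ne N)).pow_eq_one, inv_one, one_pow]
  have hvec : (fun j : ZMod N => exp (-2 * Real.pi * I / N) ^ (j.val * k.val)) =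
      ⇑(AddChar.zmodChar N hzN) := by
    funext j
    rw [AddChar.zmodChar_apply, ← hω, ← pow_mul, mul_comm k.val]
  rw [hvec, mulVec_addChar_of_apply_eq_sub
      (fun d : ZMod N => (((ε ^ d.val + ε ^ (N - d.val)) / (1 - ε) : ℝ) : ℂ)) (by simp [hM]),
    ← Real.cos_neg θ, ← sum_range_mul_exp_mul_I_pow hε.ne' (abs_lt.2 ⟨by linarith, hε1⟩) hzN,
    ← ZMod.sum_comp_val N (fun m => (((ε ^ m + ε ^ (N - m)) / (1 - ε) : ℝ) : ℂ) * _ ^ m)]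
  rfl

open Complex in
theorem circulant_eigenvalues (N : ℕ) [NeZero N] (hN : 1 ≤ N) (ε : ℝ) (hε : 0 < ε) (hε1 : ε < 1)
    (M : Matrix (ZMod N) (ZMod N) ℝ)
    (hM : ∀ i j : ZMod N, M i j = (ε ^ (j - i).val + ε ^ (N - (j - i).val)) / (1 - ε)) :
    ∀ k : ZMod N,
      (M.map (Complex.ofReal)).mulVec
          (fun j : ZMod N => Complex.exp (-2 * Real.pi * Complex.I / N) ^ (j.val * k.val))
        = (((1 - ε ^ N) / (1 - ε) *
              ((1 - ε ^ 2) / (1 - 2 * ε * Real.cos (2 * Real.pi * k.val / N) + ε ^ 2)) : ℝ) : ℂ) •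
            (fun j : ZMod N => Complex.exp (-2 * Real.pi * Complex.I / N) ^ (j.val * k.val)) :=
  circulant_eigenvalues_general N ε hε hε1 M hM
end

section
/- Let ε ∈ (0,1), N ≥ 1, and M the N×N symmetric circulant matrix with M_{i,j} = (ε^{d} + ε^{N-d})/(1-ε), d = (j-i) mod N. Then M is positive definite, so the quadratic form T ↦ Tᵀ M T is strictly convex on ℝ^N. -/
/-!
Let `E` be the circulant matrix `E i k = ε ^ ((i - k) mod N)`. Summing two geometric series gives
`M = (1 + ε) / (1 - ε ^ N) • E * Eᵀ`, and `E` is invertible because every row vector `x`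
satisfies `(x E) k - ε (x E) (k + 1) = (1 - ε ^ N) x k`. Hence `M` is positive definite, and the
quadratic form of a positive definite matrix is strictly convex: along a segment it differs from
the chord by `a b (x - y)ᵀ M (x - y)`.
-/

open Finset Matrix

theorem ZMod.sum_eq_sum_range {M : Type*} [AddCommMonoid M] {N : ℕ} [NeZero N]
    (f : ZMod N → M) : ∑ a, f a = ∑ s ∈ range N, f s :=
  sum_nbij' ZMod.val Nat.cast (by simp [ZMod.val_lt]) (by simp)
    (by simp) (fun s hs => by simp [ZMod.val_cast_of_lt (mem_range.mp hs)]) (by simp)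

theorem one_sub_sq_mul_sum_range_pow_mul_pow_add_mod {R : Type*} [CommRing R] (ε : R)
    {N d : ℕ} (hd : d ≤ N) :
    (1 - ε ^ 2) * ∑ s ∈ range N, ε ^ s * ε ^ ((s + d) % N) =
      (1 - ε ^ N) * (ε ^ d + ε ^ (N - d)) := by
  have hsplit : ∑ s ∈ range N, ε ^ s * ε ^ ((s + d) % N) =
      ε ^ d * ∑ s ∈ range (N - d), (ε ^ 2) ^ s +
        ε ^ (N - d) * ∑ t ∈ range d, (ε ^ 2) ^ t := by
    rw [← Nat.sub_add_cancel hd, sum_range_add, Nat.sub_add_cancel hd, mul_sum, mul_sum]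
    congr 1 <;> refine sum_congr rfl fun s hs => ?_ <;> rw [mem_range] at hs
    · rw [Nat.mod_eq_of_lt (by omega)]; ring
    · rw [show N - d + s + d = s + N by omega, Nat.add_mod_right, Nat.mod_eq_of_lt (by omega)]
      ring
  have hgeom (m : ℕ) : (1 - ε ^ 2) * ∑ s ∈ range m, (ε ^ 2) ^ s = 1 - (ε ^ m) ^ 2 := by
    rw [mul_neg_geom_sum, ← pow_mul, ← pow_mul, mul_comm]
  have hN : ε ^ d * ε ^ (N - d) = ε ^ N := by rw [← pow_add, Nat.add_sub_cancel' hd]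
  rw [hsplit, mul_add, mul_left_comm, hgeom, mul_left_comm, hgeom, ← hN]
  ring

section GeometricCirculant

variable {R : Type*} [CommRing R] {N : ℕ} [NeZero N]

theorem one_sub_sq_mul_circulant_mul_transpose_apply (ε : R) (i j : ZMod N) :
    (1 - ε ^ 2) * (circulant (fun a : ZMod N => ε ^ a.val) *
      (circulant fun a : ZMod N => ε ^ a.val)ᵀ) i j =
      (1 - ε ^ N) * (ε ^ (j - i).val + ε ^ (N - (j - i).val)) := by
  rw [← one_sub_sq_mul_sum_range_pow_mul_pow_add_mod ε (ZMod.val_lt (j - i)).le, mul_apply,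
    ← Equiv.sum_comp (Equiv.subLeft i), ZMod.sum_eq_sum_range]
  congr 1
  refine sum_congr rfl fun s hs => ?_
  rw [transpose_apply, circulant_apply, circulant_apply, Equiv.subLeft_apply, sub_sub_cancel,
    show j - (i - s) = s + (j - i) by ring, ZMod.val_add, ZMod.val_cast_of_lt (mem_range.mp hs)]

theorem vecMul_circulant_pow_val_apply (ε : R) (x : ZMod N → R) (k : ZMod N) :
    (x ᵥ* circulant fun a : ZMod N => ε ^ a.val) k = ∑ s ∈ range N, x (k + s) * ε ^ s := by
  rw [vecMul, dotProduct, ← Equiv.sum_comp (Equiv.addLeft k), ZMod.sum_eq_sum_range]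
  refine sum_congr rfl fun s hs => ?_
  rw [circulant_apply, Equiv.coe_addLeft, add_sub_cancel_left,
    ZMod.val_cast_of_lt (mem_range.mp hs)]

theorem vecMul_circulant_pow_val_sub_mul_apply_add_one (ε : R) (x : ZMod N → R) (k : ZMod N) :
    (x ᵥ* circulant fun a : ZMod N => ε ^ a.val) k -
        ε * (x ᵥ* circulant fun a : ZMod N => ε ^ a.val) (k + 1) = (1 - ε ^ N) * x k := by
  simp only [vecMul_circulant_pow_val_apply, mul_sum, ← sum_sub_distrib]
  have hstep (s : ℕ) : ε * (x (k + 1 + s) * ε ^ s) = x (k + (s + 1 : ℕ)) * ε ^ (s + 1) := by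
    push_cast; ring_nf
  simp only [hstep]
  rw [sum_range_sub', ZMod.natCast_self]
  simp only [Nat.cast_zero, add_zero, pow_zero]
  ring

theorem vecMul_circulant_pow_val_injective [IsDomain R] {ε : R} (hε : ε ^ N ≠ 1) :
    Function.Injective (circulant fun a : ZMod N => ε ^ a.val).vecMul := by
  rw [← coe_vecMulLinear, injective_iff_map_eq_zero]
  intro x (hx : x ᵥ* _ = 0)
  funext k
  have h := vecMul_circulant_pow_val_sub_mul_apply_add_one ε x k
  simp only [hx, Pi.zero_apply, mul_zero, sub_zero] at h
  exact (mul_eq_zero.mp h.symm).resolve_left (sub_ne_zero.mpr hε.symm)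

end GeometricCirculant

theorem Matrix.PosDef.strictConvexOn_dotProduct_mulVec {𝕜 n : Type*} [Fintype n]
    [Field 𝕜] [LinearOrder 𝕜] [IsStrictOrderedRing 𝕜] [StarRing 𝕜] [TrivialStar 𝕜]
    {M : Matrix n n 𝕜}
    (hM : M.PosDef) : StrictConvexOn 𝕜 Set.univ fun x : n → 𝕜 => x ⬝ᵥ M *ᵥ x := by
  refine ⟨convex_univ, fun x _ y _ hxy a b ha hb hab => ?_⟩
  obtain ⟨z, rfl⟩ : ∃ z, x = y + z := ⟨x - y, by abel⟩
  have hz : 0 < z ⬝ᵥ M *ᵥ z := by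
    simpa using hM.dotProduct_mulVec_pos (x := z) (by rintro rfl; simp at hxy)
  have hcomb : a • (y + z) + b • y = y + a • z := by
    rw [smul_add, add_right_comm, ← add_smul, hab, one_smul]
  simp only [hcomb, smul_eq_mul, mulVec_add, mulVec_smul, dotProduct_add, add_dotProduct,
    dotProduct_smul, smul_dotProduct, smul_eq_mul]
  linear_combination
    mul_pos (mul_pos ha hb) hz + (a * (z ⬝ᵥ M *ᵥ z) - y ⬝ᵥ M *ᵥ y) * hab

theorem circulant_posdef_strictconvex_general (N : ℕ) [NeZero N] (ε : ℝ)
    (hε : 0 < ε) (hε1 : ε < 1)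
    (M : Matrix (ZMod N) (ZMod N) ℝ)
    (hM : ∀ i j : ZMod N, M i j = (ε ^ (j - i).val + ε ^ (N - (j - i).val)) / (1 - ε)) :
    M.PosDef ∧
      StrictConvexOn ℝ (Set.univ : Set (ZMod N → ℝ))
        (fun T : ZMod N → ℝ => ∑ i : ZMod N, ∑ j : ZMod N, T i * M i j * T j) := by
  set E := circulant fun a : ZMod N => ε ^ a.val
  have hεN : ε ^ N < 1 := pow_lt_one₀ hε.le hε1 (NeZero.ne N)
  have hM_eq : M = ((1 + ε) / (1 - ε ^ N)) • (E * Eᴴ) := by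
    ext i j
    have hsq : 1 - ε ^ 2 ≠ 0 := by nlinarith
    rw [hM, conjTranspose_eq_transpose_of_trivial, Matrix.smul_apply, smul_eq_mul,
      ← mul_div_cancel_left₀ ((E * Eᵀ) i j) hsq, one_sub_sq_mul_circulant_mul_transpose_apply]
    field_simp [(by linarith : 1 - ε ≠ 0), (by linarith : 1 - ε ^ N ≠ 0)]
    ring
  have hpos : M.PosDef := hM_eq ▸
    (PosDef.mul_conjTranspose_self E (vecMul_circulant_pow_val_injective hεN.ne)).smul
      (div_pos (by linarith) (by linarith))
  have hform :
      (fun T : ZMod N → ℝ => ∑ i, ∑ j, T i * M i j * T j) = fun T => T ⬝ᵥ M *ᵥ T := by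
    funext T
    simp only [dotProduct, mulVec, mul_sum, mul_assoc]
  exact ⟨hpos, hform ▸ hpos.strictConvexOn_dotProduct_mulVec⟩

theorem circulant_posdef_strictconvex (N : ℕ) [NeZero N] (hN : 1 ≤ N) (ε : ℝ)
    (hε : 0 < ε) (hε1 : ε < 1)
    (M : Matrix (ZMod N) (ZMod N) ℝ)
    (hM : ∀ i j : ZMod N, M i j = (ε ^ (j - i).val + ε ^ (N - (j - i).val)) / (1 - ε)) :
    M.PosDef ∧
      StrictConvexOn ℝ (Set.univ : Set (ZMod N → ℝ))
        (fun T : ZMod N → ℝ => ∑ i : ZMod N, ∑ j : ZMod N, T i * M i j * T j) :=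
  circulant_posdef_strictconvex_general N ε hε hε1 M hM
end

section
/- Let ε ∈ (0,1), N ≥ 1, n > 0, and M the N×N circulant matrix with M_{i,j} = (ε^{(j-i) mod N} + ε^{N-((j-i) mod N)})/(1-ε). The function f(T) = ((1-ε)/(2n(1-ε^N))) · Tᵀ M T + n, restricted to the simplex {T ∈ ℝ_{≥0}^N : ∑_i T_i = n}, attains its unique global minimum at T = (n/N,…,n/N). -/
lemma zmod_val_sub_one {N : ℕ} [NeZero N] (x : ZMod N) (hx : x ≠ 0) :
    (x - 1).val + 1 = x.val := by
  have hlt := ZMod.val_lt x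
  have h0 : x.val ≠ 0 := fun h => hx ((ZMod.val_eq_zero x).mp h)
  have hx1 : x - 1 = ((x.val - 1 : ℕ) : ZMod N) := by
    have hc : ((x.val : ℕ) : ZMod N) = x := ZMod.natCast_rightInverse x
    rw [Nat.cast_sub (by omega : 1 ≤ x.val), hc, Nat.cast_one]
  rw [hx1, ZMod.val_cast_of_lt (by omega)]
  omega

lemma zmod_val_neg_one' {N : ℕ} [NeZero N] : (-1 : ZMod N).val = N - 1 := by
  obtain ⟨m, rfl⟩ := Nat.exists_eq_succ_of_ne_zero (NeZero.ne N)
  simpa using ZMod.val_neg_one m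

theorem aoi_min_at_uniform (N : ℕ) [NeZero N] (hN : 1 ≤ N) (ε n : ℝ)
    (hε : 0 < ε) (hε1 : ε < 1) (hn : 0 < n)
    (M : Matrix (ZMod N) (ZMod N) ℝ)
    (hM : ∀ i j : ZMod N, M i j = (ε ^ (j - i).val + ε ^ (N - (j - i).val)) / (1 - ε))
    (f : (ZMod N → ℝ) → ℝ)
    (hf : ∀ T, f T = ((1 - ε) / (2 * n * (1 - ε ^ N))) *
        (∑ i : ZMod N, ∑ j : ZMod N, T i * M i j * T j) + n) :
    ((fun _ : ZMod N => n / N) ∈ {T : ZMod N → ℝ | (∀ i, 0 ≤ T i) ∧ ∑ i, T i = n}) ∧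
      ∀ T ∈ {T : ZMod N → ℝ | (∀ i, 0 ≤ T i) ∧ ∑ i, T i = n},
        T ≠ (fun _ : ZMod N => n / N) → f (fun _ => n / N) < f T := by
  have hNR : (0:ℝ) < N := by
    have : 0 < N := hN
    exact_mod_cast this
  have hεN : ε ^ N < 1 := pow_lt_one₀ hε.le hε1 (by omega)
  have h1ε : (0:ℝ) < 1 - ε := by linarith
  have h1εN : (0:ℝ) < 1 - ε ^ N := by linarith
  have hcard : (Finset.univ : Finset (ZMod N)).card = N := by
    simpa using ZMod.card N
  have husum : (∑ _i : ZMod N, (n / N : ℝ)) = n := by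
    rw [Finset.sum_const, hcard, nsmul_eq_mul]
    field_simp
  refine ⟨⟨fun i => by positivity, husum⟩, ?_⟩
  rintro T ⟨hTpos, hTsum⟩ hTne
  -- d is the deviation from uniform, z its exponential smoothing
  set d : ZMod N → ℝ := fun i => T i - n / N with hd
  set z : ZMod N → ℝ := fun i => ∑ j, ε ^ ((j - i).val) * d j with hz
  have hdsum : ∑ i, d i = 0 := by
    rw [hd]
    rw [Finset.sum_sub_distrib, hTsum, husum]
    ring
  have hdne : ∃ i, d i ≠ 0 := by
    by_contra h
    push_neg at h
    apply hTne
    funext i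
    have := h i
    rw [hd] at this
    simpa [sub_eq_zero] using this
  -- M depends only on the difference of indices
  have hMshift : ∀ i j : ZMod N, M i j = M 0 (j - i) := by
    intro i j
    rw [hM, hM]
    norm_num
  -- row and column sums of M are constant
  have hrow : ∀ i : ZMod N, ∑ j, M i j = ∑ k, M 0 k := by
    intro i
    rw [Finset.sum_congr rfl (fun j _ => hMshift i j)]
    exact Fintype.sum_equiv (Equiv.subRight i) _ _ (fun j => rfl)
  have hcol : ∀ j : ZMod N, ∑ i, M i j = ∑ k, M 0 k := by
    intro j
    rw [Finset.sum_congr rfl (fun i _ => hMshift i j)]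
    exact Fintype.sum_equiv (Equiv.subLeft j) _ _ (fun i => rfl)
  -- key recurrence: z i - ε * z (i+1) = (1 - ε^N) * d i
  have hzd : ∀ i : ZMod N, z i - ε * z (i + 1) = (1 - ε ^ N) * d i := by
    intro i
    have key : ∀ j : ZMod N, ε ^ ((j - i).val) * d j - ε * (ε ^ ((j - (i+1)).val) * d j)
        = (if i = j then (1 - ε ^ N) * d j else 0) := by
      intro j
      by_cases hji : j = i
      · subst hji
        rw [if_pos rfl]
        have h1 : j - (j + 1) = -1 := by ring
        have h2 : j - j = 0 := by ring
        rw [h1, h2, zmod_val_neg_one', ZMod.val_zero, pow_zero]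
        have h3 : ε * ε ^ (N - 1) = ε ^ N := by
          rw [← pow_succ']
          congr 1
          omega
        linear_combination (-d j) * h3
      · rw [if_neg (fun h => hji h.symm)]
        have hx : j - i ≠ 0 := sub_ne_zero.mpr hji
        have h2 : j - (i + 1) = (j - i) - 1 := by ring
        have h3 : ε * ε ^ (((j - i) - 1).val) = ε ^ ((j - i).val) := by
          rw [← pow_succ', zmod_val_sub_one _ hx]
        rw [h2]
        linear_combination (-d j) * h3
    have expand : z i - ε * z (i + 1)
        = ∑ j, (ε ^ ((j - i).val) * d j - ε * (ε ^ ((j - (i+1)).val) * d j)) := by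
      show (∑ j, ε ^ ((j - i).val) * d j) - ε * (∑ j, ε ^ ((j - (i+1)).val) * d j) = _
      rw [Finset.mul_sum, ← Finset.sum_sub_distrib]
    rw [expand, Finset.sum_congr rfl (fun j _ => key j), Finset.sum_ite_eq]
    simp
  -- quadratic form identity: (1-ε) * Q d = 2 * A - (1-ε^N) * B
  set A : ℝ := ∑ i, d i * z i with hA
  set B : ℝ := ∑ i, d i ^ 2 with hB
  set Z : ℝ := ∑ i, z i ^ 2 with hZ
  set W : ℝ := ∑ i, z i * z (i + 1) with hW
  have hQd : (1 - ε) * (∑ i, ∑ j, d i * M i j * d j) = 2 * A - (1 - ε ^ N) * B := by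
    have hM' : ∀ i j : ZMod N, (1 - ε) * (d i * M i j * d j)
        = d i * d j * ε ^ ((j - i).val) + d i * d j * ε ^ ((i - j).val)
          + (if i = j then (ε ^ N - 1) * (d i * d j) else 0) := by
      intro i j
      rw [hM]
      by_cases h : i = j
      · subst h
        rw [if_pos rfl]
        have h2 : i - i = 0 := by ring
        rw [h2, ZMod.val_zero, pow_zero, Nat.sub_zero]
        field_simp
        ring
      · rw [if_neg h]
        have hx : j - i ≠ 0 := sub_ne_zero.mpr (fun hh => h hh.symm)
        have hlt := ZMod.val_lt (j - i)
        have hv : N - (j - i).val = (i - j).val := by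
          have hneg : i - j = -(j - i) := by ring
          rw [hneg, ZMod.neg_val, if_neg hx]
        rw [hv]
        field_simp
        ring
    have step1 : (1 - ε) * (∑ i, ∑ j, d i * M i j * d j)
        = ∑ i, ∑ j, (d i * d j * ε ^ ((j - i).val) + d i * d j * ε ^ ((i - j).val)
          + (if i = j then (ε ^ N - 1) * (d i * d j) else 0)) := by
      rw [Finset.mul_sum]
      refine Finset.sum_congr rfl (fun i _ => ?_)
      rw [Finset.mul_sum]
      exact Finset.sum_congr rfl (fun j _ => hM' i j)
    rw [step1]
    have split : ∀ i : ZMod N, ∑ j, (d i * d j * ε ^ ((j - i).val) + d i * d j * ε ^ ((i - j).val)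
          + (if i = j then (ε ^ N - 1) * (d i * d j) else 0))
        = (∑ j, d i * d j * ε ^ ((j - i).val)) + (∑ j, d i * d j * ε ^ ((i - j).val))
          + (ε ^ N - 1) * d i ^ 2 := by
      intro i
      rw [Finset.sum_add_distrib, Finset.sum_add_distrib, Finset.sum_ite_eq]
      simp [sq]
    rw [Finset.sum_congr rfl (fun i _ => split i), Finset.sum_add_distrib,
      Finset.sum_add_distrib]
    have t1 : ∑ i, ∑ j, d i * d j * ε ^ ((j - i).val) = A := by
      rw [hA]
      refine Finset.sum_congr rfl (fun i _ => ?_)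
      rw [hz, Finset.mul_sum]
      exact Finset.sum_congr rfl (fun j _ => by ring)
    have t2 : ∑ i : ZMod N, ∑ j : ZMod N, d i * d j * ε ^ ((i - j).val) = A := by
      rw [Finset.sum_comm, hA]
      refine Finset.sum_congr rfl (fun j _ => ?_)
      rw [hz, Finset.mul_sum]
      exact Finset.sum_congr rfl (fun i _ => by ring)
    have t3 : ∑ i, (ε ^ N - 1) * d i ^ 2 = (ε ^ N - 1) * B := by
      rw [hB, Finset.mul_sum]
    rw [t1, t2, t3]
    ring
  -- shift invariance
  have hshiftZ : ∑ i : ZMod N, z (i + 1) ^ 2 = Z := by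
    rw [hZ]
    exact Fintype.sum_equiv (Equiv.addRight (1 : ZMod N)) _ _ (fun i => rfl)
  -- relations
  have h2 : (1 - ε ^ N) * A = Z - ε * W := by
    rw [hA, Finset.mul_sum]
    have : ∀ i : ZMod N, (1 - ε ^ N) * (d i * z i) = z i ^ 2 - ε * (z i * z (i + 1)) := by
      intro i
      linear_combination (-z i) * hzd i
    rw [Finset.sum_congr rfl (fun i _ => this i), Finset.sum_sub_distrib]
    rw [hZ, hW, Finset.mul_sum]
  have h3 : (1 - ε ^ N) ^ 2 * B = Z - 2 * ε * W + ε ^ 2 * Z := by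
    rw [hB, Finset.mul_sum]
    have key : ∀ i : ZMod N, (1 - ε ^ N) ^ 2 * d i ^ 2
        = z i ^ 2 - 2 * ε * (z i * z (i + 1)) + ε ^ 2 * z (i + 1) ^ 2 := by
      intro i
      linear_combination (-((1 - ε ^ N) * d i + z i - ε * z (i + 1))) * hzd i
    rw [Finset.sum_congr rfl (fun i _ => key i)]
    rw [Finset.sum_add_distrib, Finset.sum_sub_distrib]
    rw [← Finset.mul_sum, ← Finset.mul_sum, hshiftZ, hZ, hW]
  -- main identity
  have hkey : (1 - ε) * (1 - ε ^ N) ^ 2 * (∑ i, ∑ j, d i * M i j * d j)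
      = (1 - ε ^ N) * (1 - ε ^ 2) * Z := by
    linear_combination (1 - ε ^ N) ^ 2 * hQd + 2 * (1 - ε ^ N) * h2 - (1 - ε ^ N) * h3
  -- Z > 0
  have hZpos : 0 < Z := by
    rcases hdne with ⟨i0, hi0⟩
    have hZnn : 0 ≤ Z := Finset.sum_nonneg (fun i _ => sq_nonneg _)
    rcases lt_or_eq_of_le hZnn with h | h
    · exact h
    · exfalso
      have hzero : ∀ i : ZMod N, z i = 0 := by
        intro i
        have := (Finset.sum_eq_zero_iff_of_nonneg (fun i _ => sq_nonneg (z i))).mp h.symm i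
          (Finset.mem_univ i)
        exact (pow_eq_zero_iff two_ne_zero).mp (by simpa using this)
      have := hzd i0
      rw [hzero i0, hzero (i0 + 1)] at this
      have : (1 - ε ^ N) * d i0 = 0 := by linarith
      rcases mul_eq_zero.mp this with h' | h'
      · linarith
      · exact hi0 h'
  -- Q d > 0
  have hQdpos : 0 < ∑ i, ∑ j, d i * M i j * d j := by
    have h5 : (0:ℝ) < 1 - ε ^ 2 := by nlinarith
    have h6 : 0 < (1 - ε ^ N) * (1 - ε ^ 2) * Z := by positivity
    rw [← hkey] at h6
    by_contra hcon
    push_neg at hcon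
    have h4 : (0:ℝ) < (1 - ε) * (1 - ε ^ N) ^ 2 := by positivity
    nlinarith [mul_nonpos_of_nonneg_of_nonpos h4.le hcon]
  -- expansion Q T = Q u + Q d
  have hexp : (∑ i, ∑ j, T i * M i j * T j)
      = (∑ i : ZMod N, ∑ j : ZMod N, (n/N) * M i j * (n/N)) + (∑ i, ∑ j, d i * M i j * d j) := by
    have hTd : ∀ i, T i = n / N + d i := fun i => by rw [hd]; ring
    have expand : ∀ i j : ZMod N, T i * M i j * T j
        = (n/N) * M i j * (n/N) + (n/N) * M i j * d j + d i * M i j * (n/N)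
          + d i * M i j * d j := by
      intro i j
      rw [hTd i, hTd j]
      ring
    have cross1 : ∑ i : ZMod N, ∑ j : ZMod N, (n/N) * M i j * d j = 0 := by
      rw [Finset.sum_comm]
      have inner : ∀ j : ZMod N, ∑ i : ZMod N, (n/N) * M i j * d j
          = (∑ k, M 0 k) * ((n/N) * d j) := by
        intro j
        rw [← hcol j, Finset.sum_mul]
        exact Finset.sum_congr rfl (fun i _ => by ring)
      rw [Finset.sum_congr rfl (fun j _ => inner j), ← Finset.mul_sum, ← Finset.mul_sum,
        hdsum, mul_zero, mul_zero]
    have cross2 : ∑ i : ZMod N, ∑ j : ZMod N, d i * M i j * (n/N) = 0 := by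
      have inner : ∀ i : ZMod N, ∑ j : ZMod N, d i * M i j * (n/N)
          = (∑ k, M 0 k) * ((n/N) * d i) := by
        intro i
        rw [← hrow i, Finset.sum_mul]
        exact Finset.sum_congr rfl (fun j _ => by ring)
      rw [Finset.sum_congr rfl (fun i _ => inner i), ← Finset.mul_sum, ← Finset.mul_sum,
        hdsum, mul_zero, mul_zero]
    calc ∑ i, ∑ j, T i * M i j * T j
        = ∑ i : ZMod N, ∑ j : ZMod N, ((n/N) * M i j * (n/N) + (n/N) * M i j * d j
            + d i * M i j * (n/N) + d i * M i j * d j) := by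
          exact Finset.sum_congr rfl (fun i _ => Finset.sum_congr rfl
            (fun j _ => expand i j))
      _ = (∑ i : ZMod N, ∑ j : ZMod N, (n/N) * M i j * (n/N))
          + (∑ i : ZMod N, ∑ j : ZMod N, (n/N) * M i j * d j)
          + (∑ i : ZMod N, ∑ j : ZMod N, d i * M i j * (n/N))
          + (∑ i, ∑ j, d i * M i j * d j) := by
          simp only [Finset.sum_add_distrib]
      _ = _ := by rw [cross1, cross2]; ring
  -- conclude
  simp only [hf]
  rw [hexp, mul_add]
  have hcoef : 0 < (1 - ε) / (2 * n * (1 - ε ^ N)) := by positivity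
  have := mul_pos hcoef hQdpos
  linarith
end

section
/- For every N ≥ 1, ε ∈ (0,1), and n > 0, n(1+ε)/(2N(1-ε)) + n ≤ n(1+ε^N)/(2(1-ε^N)) + n, i.e., the optimally-offset multiplexing scheme achieves average AoI no larger than the packet duplication scheme. -/
/-!
After cancelling `n / 2` and the factor `1 - ε`, the claim becomes
`(1 + ε)(1 + ε + ⋯ + ε^(N-1)) ≤ N (1 + ε^N)`. Reflecting the sum `∑ ε^(i+1)` turns the left side
into `∑_{i<N} (ε^i + ε^(N-i))`, and each term is at most `1 + ε^N` because
`(1 - ε^i)(1 - ε^(N-i)) ≥ 0`.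
-/

open Finset

lemma pow_add_pow_sub_le_one_add_pow {x : ℝ} (hx : 0 ≤ x) {i N : ℕ} (hi : i ≤ N) :
    x ^ i + x ^ (N - i) ≤ 1 + x ^ N := by
  have hsplit : x ^ N = x ^ i * x ^ (N - i) := by rw [← pow_add, Nat.add_sub_cancel' hi]
  have hprod : 0 ≤ (1 - x ^ i) * (1 - x ^ (N - i)) := by
    rcases le_total x 1 with h | h
    · exact mul_nonneg (sub_nonneg.2 (pow_le_one₀ hx h)) (sub_nonneg.2 (pow_le_one₀ hx h))
    · exact mul_nonneg_of_nonpos_of_nonpos (sub_nonpos.2 (one_le_pow₀ h))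
        (sub_nonpos.2 (one_le_pow₀ h))
  linarith

lemma one_add_mul_geom_sum_le {x : ℝ} (hx : 0 ≤ x) (N : ℕ) :
    (1 + x) * ∑ i ∈ range N, x ^ i ≤ N * (1 + x ^ N) := by
  have hreflect : ∑ i ∈ range N, x ^ (i + 1) = ∑ i ∈ range N, x ^ (N - i) := by
    rw [← sum_range_reflect]
    refine sum_congr rfl fun i hi => ?_
    rw [mem_range] at hi
    congr 1
    omega
  calc (1 + x) * ∑ i ∈ range N, x ^ i
      = ∑ i ∈ range N, (x ^ i + x ^ (N - i)) := by
        rw [sum_add_distrib, ← hreflect, add_mul, one_mul, mul_sum]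
        simp only [pow_succ']
    _ ≤ ∑ _i ∈ range N, (1 + x ^ N) :=
        sum_le_sum fun i hi => pow_add_pow_sub_le_one_add_pow hx (mem_range.1 hi).le
    _ = N * (1 + x ^ N) := by rw [sum_const, card_range, nsmul_eq_mul]

lemma one_add_mul_one_sub_pow_le {x : ℝ} (hx : 0 ≤ x) (hx1 : x ≤ 1) (N : ℕ) :
    (1 + x) * (1 - x ^ N) ≤ N * (1 - x) * (1 + x ^ N) := by
  calc (1 + x) * (1 - x ^ N) = (1 - x) * ((1 + x) * ∑ i ∈ range N, x ^ i) := by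
        rw [← mul_neg_geom_sum]; ring
    _ ≤ (1 - x) * (N * (1 + x ^ N)) :=
        mul_le_mul_of_nonneg_left (one_add_mul_geom_sum_le hx N) (sub_nonneg.2 hx1)
    _ = N * (1 - x) * (1 + x ^ N) := by ring

theorem mp_le_pd (N : ℕ) (hN : 1 ≤ N) (ε n : ℝ) (hε : 0 < ε) (hε1 : ε < 1) (hn : 0 < n) :
    n * (1 + ε) / (2 * N * (1 - ε)) + n ≤ n * (1 + ε ^ N) / (2 * (1 - ε ^ N)) + n := by
  have hpow : ε ^ N < 1 := pow_lt_one₀ hε.le hε1 (by omega)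
  have hN' : (0 : ℝ) < N := by exact_mod_cast hN
  have h1ε : 0 < 1 - ε := sub_pos.2 hε1
  rw [add_le_add_iff_right, mul_div_assoc, mul_div_assoc]
  refine mul_le_mul_of_nonneg_left ?_ hn.le
  rw [div_le_div_iff₀ (by positivity) (by linarith)]
  linarith [one_add_mul_one_sub_pow_le hε.le hε1.le N]
end
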